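/- Let θ, θ′ be real numbers other than k and assume the pair θ, θ′ is tight. Then (θ + k/(a₁+1))(θ′ + k/(a₁+1)) = −k a₁ b₁/(a₁+1)². -/

import Mathlib

/-- `σ` is a pseudo cosine sequence: `σ 0 = 1` and
`c_i σ_{i-1} + a_i σ_i + b_i σ_{i+1} = k σ_1 σ_i` for `1 ≤ i ≤ D-1`
(the case `i = 0` is automatic since `c_0 = 0`, `a_0 = 0`, `b_0 = k`). -/
def IsPCS (D : ℕ) (k : ℝ) (a b c σ : ℕ → ℝ) : Prop :=
  σ 0 = 1 ∧ ∀ i, 1 ≤ i → i ≤ D - 1 →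
    c i * σ (i - 1) + a i * σ i + b i * σ (i + 1) = k * σ 1 * σ i

/-- The pair of real numbers θ, θ' is tight: the entrywise product of their
pseudo cosine sequences is again a pseudo cosine sequence (recall θ = k·σ₁). -/
def Tight (D : ℕ) (k : ℝ) (a b c : ℕ → ℝ) (θ θ' : ℝ) : Prop :=
  ∀ σ ρ : ℕ → ℝ,
    IsPCS D k a b c σ → k * σ 1 = θ →
    IsPCS D k a b c ρ → k * ρ 1 = θ' →
    IsPCS D k a b c (fun i => σ i * ρ i)

/-- The canonical pseudo cosine sequence for eigenvalue θ. -/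
noncomputable def pcsSeq (k θ : ℝ) (a b c : ℕ → ℝ) : ℕ → ℝ
  | 0 => 1
  | 1 => θ / k
  | (n+2) => (θ * pcsSeq k θ a b c (n+1) - c (n+1) * pcsSeq k θ a b c n
      - a (n+1) * pcsSeq k θ a b c (n+1)) / b (n+1)

lemma pcsSeq_isPCS (D : ℕ) (k θ : ℝ) (a b c : ℕ → ℝ) (hk : k ≠ 0)
    (hb : ∀ i, i ≤ D - 1 → b i ≠ 0) :
    IsPCS D k a b c (pcsSeq k θ a b c) := by
  constructor
  · rfl
  · intro i h1 h2
    obtain ⟨n, rfl⟩ : ∃ n, i = n + 1 := ⟨i - 1, by omega⟩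
    have hbn : b (n + 1) ≠ 0 := hb (n + 1) h2
    have h1' : k * pcsSeq k θ a b c 1 = θ := by
      show k * (θ / k) = θ
      field_simp
    rw [h1']
    have hdef : pcsSeq k θ a b c (n + 2) = (θ * pcsSeq k θ a b c (n+1)
        - c (n+1) * pcsSeq k θ a b c n - a (n+1) * pcsSeq k θ a b c (n+1)) / b (n+1) := rfl
    simp only [Nat.add_sub_cancel, hdef]
    field_simp
    ring

lemma pcsSeq_one (k θ : ℝ) (a b c : ℕ → ℝ) (hk : k ≠ 0) :
    k * pcsSeq k θ a b c 1 = θ := by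
  show k * (θ / k) = θ
  field_simp

/-- If θ, θ' ≠ k form a tight pair then
(θ + k/(a₁+1))(θ' + k/(a₁+1)) = −k a₁ b₁/(a₁+1)². -/
theorem tight_pair_eigenvalue_eq (D : ℕ) (hD : 3 ≤ D) (k : ℝ) (a b c : ℕ → ℝ)
    (hk : 0 < k) (hb0 : b 0 = k) (ha0 : a 0 = 0) (hc1 : c 1 = 1)
    (hsum : ∀ i, i ≤ D → c i + a i + b i = k)
    (hapos : ∀ i, i ≤ D → 0 ≤ a i)
    (hbpos : ∀ i, i ≤ D - 1 → 0 < b i)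
    (hcpos : ∀ i, 1 ≤ i → i ≤ D → 0 < c i)
    (θ θ' : ℝ) (hθ : θ ≠ k) (hθ' : θ' ≠ k)
    (ht : Tight D k a b c θ θ') :
    (θ + k / (a 1 + 1)) * (θ' + k / (a 1 + 1))
      = -(k * a 1 * b 1) / (a 1 + 1) ^ 2 := by
  have hk0 : k ≠ 0 := ne_of_gt hk
  have hb : ∀ i, i ≤ D - 1 → b i ≠ 0 := fun i hi => ne_of_gt (hbpos i hi)
  set σ := pcsSeq k θ a b c with hσdef
  set ρ := pcsSeq k θ' a b c with hρdef
  have hσ : IsPCS D k a b c σ := pcsSeq_isPCS D k θ a b c hk0 hb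
  have hρ : IsPCS D k a b c ρ := pcsSeq_isPCS D k θ' a b c hk0 hb
  have hkσ : k * σ 1 = θ := pcsSeq_one k θ a b c hk0
  have hkρ : k * ρ 1 = θ' := pcsSeq_one k θ' a b c hk0
  have hτ : IsPCS D k a b c (fun i => σ i * ρ i) := ht σ ρ hσ hkσ hρ hkρ
  have h1D : (1:ℕ) ≤ D - 1 := by omega
  have hσe := hσ.2 1 le_rfl h1D
  have hρe := hρ.2 1 le_rfl h1D
  have hτe := hτ.2 1 le_rfl h1D
  simp only at hτe
  have hσ0 : σ 0 = 1 := hσ.1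
  have hρ0 : ρ 0 = 1 := hρ.1
  norm_num [hσ0, hρ0, hc1] at hσe hρe hτe
  have hb1 : b 1 ≠ 0 := hb 1 h1D
  have hk1 : k = c 1 + a 1 + b 1 := (hsum 1 (by omega)).symm
  rw [hc1] at hk1
  have ha1 : (0:ℝ) ≤ a 1 := hapos 1 (by omega)
  have ha1' : a 1 + 1 ≠ 0 := by positivity
  -- eliminate σ 2 and ρ 2
  have h1 : b 1 * σ 2 = k * σ 1 * σ 1 - a 1 * σ 1 - 1 := by linear_combination hσe
  have h2 : b 1 * ρ 2 = k * ρ 1 * ρ 1 - a 1 * ρ 1 - 1 := by linear_combination hρe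
  have hE : b 1 + a 1 * b 1 * (σ 1 * ρ 1)
      + (k * σ 1 * σ 1 - a 1 * σ 1 - 1) * (k * ρ 1 * ρ 1 - a 1 * ρ 1 - 1)
      = b 1 * (k * (σ 1 * ρ 1) * (σ 1 * ρ 1)) := by
    linear_combination (b 1) * hτe - (k * ρ 1 * ρ 1 - a 1 * ρ 1 - 1) * h1
      - (b 1 * σ 2) * h2
  -- σ 1 ≠ 1, ρ 1 ≠ 1
  have hs1 : σ 1 ≠ 1 := by
    intro h
    exact hθ (by rw [← hkσ, h, mul_one])
  have ht1 : ρ 1 ≠ 1 := by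
    intro h
    exact hθ' (by rw [← hkρ, h, mul_one])
  have hfact : (σ 1 - 1) * ((ρ 1 - 1) *
      ((1 + a 1) * k * (σ 1 * ρ 1) + k * (σ 1 + ρ 1) + (1 + b 1))) = 0 := by
    linear_combination hE + (σ 1 + ρ 1 - σ 1 * ρ 1 + σ 1 * ρ 1 * a 1
      - σ 1 * σ 1 * ρ 1 * ρ 1 * k) * hk1
  have key : (1 + a 1) * k * (σ 1 * ρ 1) + k * (σ 1 + ρ 1) + (1 + b 1) = 0 := by
    rcases mul_eq_zero.mp hfact with h | h
    · exact absurd (by linarith [sub_eq_zero.mp h]) hs1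
    rcases mul_eq_zero.mp h with h' | h'
    · exact absurd (by linarith [sub_eq_zero.mp h']) ht1
    · exact h'
  have hgoal : ((a 1 + 1) * (k * σ 1) + k) * ((a 1 + 1) * (k * ρ 1) + k)
      = -(k * a 1 * b 1) := by
    linear_combination (k * (a 1 + 1)) * key + k * hk1
  have expand : (k * σ 1 + k / (a 1 + 1)) * (k * ρ 1 + k / (a 1 + 1))
      = (((a 1 + 1) * (k * σ 1) + k) * ((a 1 + 1) * (k * ρ 1) + k)) / (a 1 + 1) ^ 2 := by
    field_simp
  rw [← hkσ, ← hkρ, expand, hgoal]
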